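/- arXiv:2508.11866 — 2 statements merged into one kernel-verified Lean document; each statement's English description precedes it below -/
import Mathlib

section
/- Let s > 2 and ε > 0. Then there exists a constant C > 0 (depending only on s and ε) such that for all sequences a, b : ℤ → ℂ, the refined commutator sequence K(k) := Σ_{k'∈ℤ} ( ⟨k⟩^s − ⟨k'⟩^s − s·(k−k')·k'·⟨k'⟩^{s−2} ) · a(k−k') · b(k') satisfies ‖K‖_{ℓ²} ≤ C ( ‖a‖_{ℓ²_{max(s, 5/2+ε)}} ‖b‖_{ℓ²_{min(s−2, 1/2+ε)}} + ‖a‖_{ℓ²_{5/2+ε}} ‖b‖_{ℓ²_{s−2}} ). (This is the Fourier-coefficient form of the refined Kato–Ponce commutator estimate for the operator C_s(f)(g) := ⟨D⟩^s(fg) − f⟨D⟩^s g + s(∂ₓf)⟨D⟩^{s−2}∂ₓg on the torus.) -/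
open scoped ENNReal

/-- Japanese bracket `⟨k⟩ = (1 + k²)^(1/2)` for an integer `k`. -/
noncomputable def jb (k : ℤ) : ℝ := Real.sqrt (1 + (k : ℝ) ^ 2)

/-- Weighted `ℓ²_s` norm of a sequence `a : ℤ → ℂ`, valued in `[0,∞]`. -/
noncomputable def l2 (s : ℝ) (a : ℤ → ℂ) : ℝ≥0∞ :=
  (∑' k : ℤ, ENNReal.ofReal (jb k ^ (2 * s) * ‖a k‖ ^ 2)) ^ (1 / 2 : ℝ)

open MeasureTheory

noncomputable def br (x : ℝ) : ℝ := Real.sqrt (1 + x ^ 2)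

lemma one_add_sq_pos (x : ℝ) : (0:ℝ) < 1 + x ^ 2 := by positivity

lemma br_pos (x : ℝ) : 0 < br x := Real.sqrt_pos.2 (one_add_sq_pos x)

lemma one_le_br (x : ℝ) : 1 ≤ br x := by
  rw [show (1:ℝ) = Real.sqrt 1 by simp [Real.sqrt_one]]
  exact Real.sqrt_le_sqrt (by nlinarith [sq_nonneg x])

lemma abs_le_br (x : ℝ) : |x| ≤ br x := by
  rw [← Real.sqrt_sq_eq_abs]
  exact Real.sqrt_le_sqrt (by nlinarith)

lemma br_rpow (x t : ℝ) : br x ^ t = (1 + x ^ 2) ^ (t / 2 : ℝ) := by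
  rw [br, Real.sqrt_eq_rpow, ← Real.rpow_mul (one_add_sq_pos x).le, one_div, inv_mul_eq_div]

lemma br_sq (x : ℝ) : br x ^ (2:ℝ) = 1 + x ^ 2 := by
  rw [br_rpow]; norm_num

lemma br_mono {x y : ℝ} (h : x ^ 2 ≤ y ^ 2) : br x ≤ br y :=
  Real.sqrt_le_sqrt (by linarith)

lemma br_rpow_le {x y t : ℝ} (h : br x ≤ br y) (ht : 0 ≤ t) : br x ^ t ≤ br y ^ t :=
  Real.rpow_le_rpow (br_pos x).le h ht

noncomputable def phiF (s x : ℝ) : ℝ := (1 + x ^ 2) ^ (s / 2 : ℝ)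
noncomputable def psiF (s x : ℝ) : ℝ := s * x * (1 + x ^ 2) ^ ((s - 2) / 2 : ℝ)

lemma phi_hasDerivAt (s x : ℝ) : HasDerivAt (phiF s) (psiF s x) x := by
  have h : HasDerivAt (fun x : ℝ => 1 + x ^ 2) (2 * x) x := by
    simpa using ((hasDerivAt_pow 2 x).const_add 1)
  have h2 := h.rpow_const (p := s / 2) (Or.inl (one_add_sq_pos x).ne')
  have he : s / 2 - 1 = (s - 2) / 2 := by ring
  rw [he] at h2
  refine h2.congr_deriv ?_
  unfold psiF; ring

lemma psi_hasDerivAt (s x : ℝ) : HasDerivAt (psiF s)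
    (s * (1 + x ^ 2) ^ ((s - 2) / 2 : ℝ) + s * (s - 2) * x ^ 2 * (1 + x ^ 2) ^ ((s - 4) / 2 : ℝ)) x := by
  have h1 : HasDerivAt (fun x : ℝ => s * x) s x := by
    simpa using (hasDerivAt_id x).const_mul s
  have h2 : HasDerivAt (fun x : ℝ => (1 + x ^ 2) ^ ((s - 2) / 2 : ℝ))
      ((s - 2) * x * (1 + x ^ 2) ^ ((s - 4) / 2 : ℝ)) x := by
    have := phi_hasDerivAt (s - 2) x
    simp only [psiF, show s - 2 - 2 = s - 4 by ring] at this; exact this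
  have := h1.mul h2
  refine this.congr_deriv ?_
  ring

lemma psi_deriv_bound {s : ℝ} (hs : 2 < s) (x : ℝ) :
    |s * (1 + x ^ 2) ^ ((s - 2) / 2 : ℝ) + s * (s - 2) * x ^ 2 * (1 + x ^ 2) ^ ((s - 4) / 2 : ℝ)|
      ≤ s * (s - 1) * (1 + x ^ 2) ^ ((s - 2) / 2 : ℝ) := by
  have h0 := one_add_sq_pos x
  have hs0 : (0:ℝ) < s := by linarith
  have hr4 : (0:ℝ) ≤ (1 + x ^ 2) ^ ((s - 4) / 2 : ℝ) := Real.rpow_nonneg h0.le _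
  have hr2 : (0:ℝ) ≤ (1 + x ^ 2) ^ ((s - 2) / 2 : ℝ) := Real.rpow_nonneg h0.le _
  have hB : (0:ℝ) ≤ s * (s - 2) * x ^ 2 * (1 + x ^ 2) ^ ((s - 4) / 2 : ℝ) := by
    apply mul_nonneg (mul_nonneg (mul_nonneg hs0.le (by linarith)) (sq_nonneg x)) hr4
  have hx2 : x ^ 2 * (1 + x ^ 2) ^ ((s - 4) / 2 : ℝ) ≤ (1 + x ^ 2) ^ ((s - 2) / 2 : ℝ) := by
    have h1 : x ^ 2 * (1 + x ^ 2) ^ ((s - 4) / 2 : ℝ)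
        ≤ (1 + x ^ 2) * (1 + x ^ 2) ^ ((s - 4) / 2 : ℝ) := by
      apply mul_le_mul_of_nonneg_right (by linarith) hr4
    have h2 : (1 + x ^ 2) * (1 + x ^ 2) ^ ((s - 4) / 2 : ℝ)
        = (1 + x ^ 2) ^ ((s - 2) / 2 : ℝ) := by
      rw [show (s - 2) / 2 = 1 + (s - 4) / 2 by ring, Real.rpow_add h0, Real.rpow_one]
    linarith [h1, h2]
  rw [abs_of_nonneg (by positivity)]
  nlinarith [mul_le_mul_of_nonneg_left hx2 (mul_nonneg hs0.le (show (0:ℝ) ≤ s - 2 by linarith))]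

lemma taylor_bound {s : ℝ} (hs : 2 < s) (y n : ℝ) :
    |phiF s (y + n) - phiF s y - n * psiF s y|
      ≤ s * (s - 1) * (1 + (|y| + |n|) ^ 2) ^ ((s - 2) / 2 : ℝ) * n ^ 2 := by
  set R : ℝ := s * (s - 1) * (1 + (|y| + |n|) ^ 2) ^ ((s - 2) / 2 : ℝ) with hRdef
  have hR0 : 0 ≤ R := by
    apply mul_nonneg (mul_nonneg (by linarith) (by linarith))
    exact Real.rpow_nonneg (by positivity) _
  set I : Set ℝ := Set.uIcc y (y + n) with hI
  have hconv : Convex ℝ I := convex_uIcc _ _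
  have hyI : y ∈ I := Set.left_mem_uIcc
  have hynI : y + n ∈ I := Set.right_mem_uIcc
  have hmem : ∀ x ∈ I, |x - y| ≤ |n| := by
    intro x hx
    rcases le_total 0 n with h | h
    · rw [hI, Set.uIcc_of_le (by linarith)] at hx
      obtain ⟨h1, h2⟩ := hx
      rw [abs_of_nonneg (by linarith), abs_of_nonneg h]; linarith
    · rw [hI, Set.uIcc_of_ge (by linarith)] at hx
      obtain ⟨h1, h2⟩ := hx
      rw [abs_of_nonpos (by linarith), abs_of_nonpos h]; linarith
  have habs : ∀ x ∈ I, |x| ≤ |y| + |n| := by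
    intro x hx
    calc |x| = |y + (x - y)| := by ring_nf
    _ ≤ |y| + |x - y| := abs_add_le _ _
    _ ≤ |y| + |n| := by linarith [hmem x hx]
  have hpsi' : ∀ x ∈ I,
      ‖s * (1 + x ^ 2) ^ ((s - 2) / 2 : ℝ) + s * (s - 2) * x ^ 2 * (1 + x ^ 2) ^ ((s - 4) / 2 : ℝ)‖ ≤ R := by
    intro x hx
    rw [Real.norm_eq_abs]
    refine (psi_deriv_bound hs x).trans ?_
    rw [hRdef]
    apply mul_le_mul_of_nonneg_left _ (mul_nonneg (by linarith) (by linarith))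
    apply Real.rpow_le_rpow (by positivity) _ (by linarith)
    have h1 : x ^ 2 ≤ (|y| + |n|) ^ 2 := by
      have := habs x hx
      nlinarith [abs_nonneg x, abs_nonneg y, abs_nonneg n, sq_abs x]
    linarith
  -- step 1: psi is Lipschitz on I
  have hlip : ∀ x ∈ I, ‖psiF s x - psiF s y‖ ≤ R * |n| := by
    intro x hx
    have h := hconv.norm_image_sub_le_of_norm_hasDerivWithin_le
      (f := psiF s)
      (f' := fun x => s * (1 + x ^ 2) ^ ((s - 2) / 2 : ℝ)
        + s * (s - 2) * x ^ 2 * (1 + x ^ 2) ^ ((s - 4) / 2 : ℝ))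
      (fun z hz => (psi_hasDerivAt s z).hasDerivWithinAt)
      (fun z hz => hpsi' z hz) hyI hx
    refine h.trans ?_
    rw [Real.norm_eq_abs]
    exact mul_le_mul_of_nonneg_left (hmem x hx) hR0
  -- step 2
  set χ : ℝ → ℝ := fun x => phiF s x - x * psiF s y with hχ
  have hχd : ∀ x : ℝ, HasDerivAt χ (psiF s x - psiF s y) x := by
    intro x
    exact (phi_hasDerivAt s x).sub (hasDerivAt_mul_const (psiF s y))
  have h := hconv.norm_image_sub_le_of_norm_hasDerivWithin_le
    (f := χ) (f' := fun x => psiF s x - psiF s y)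
    (fun z hz => (hχd z).hasDerivWithinAt)
    (fun z hz => hlip z hz) hyI hynI
  have he : χ (y + n) - χ y = phiF s (y + n) - phiF s y - n * psiF s y := by
    rw [hχ]; ring
  have he2 : ‖(y + n) - y‖ = |n| := by rw [Real.norm_eq_abs]; ring_nf
  rw [he, he2] at h
  calc |phiF s (y + n) - phiF s y - n * psiF s y| ≤ R * |n| * |n| := h
  _ = R * n ^ 2 := by rw [mul_assoc, ← abs_mul, abs_mul_self]; ring_nf

lemma symbol_bound_real {s : ℝ} (hs : 2 < s) :
    ∃ C : ℝ, 0 < C ∧ ∀ θ : ℝ, 0 ≤ θ → ∀ u v : ℝ,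
      |br u ^ s - br v ^ s - s * (u - v) * v * br v ^ (s - 2)|
        ≤ C * (br (u - v) ^ (s + θ) * br v ^ (-θ)) + C * (br (u - v) ^ (2:ℝ) * br v ^ (s - 2)) := by
  have hs0 : (0:ℝ) < s := by linarith
  set C1 : ℝ := 2 ^ (s:ℝ) + 1 + s with hC1
  set C2 : ℝ := s * (s - 1) * 2 ^ (s - 2 : ℝ) with hC2
  have hC1pos : 0 < C1 := by
    have : (0:ℝ) < 2 ^ (s:ℝ) := Real.rpow_pos_of_pos (by norm_num) _
    rw [hC1]; linarith
  have hC2pos : 0 < C2 := by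
    have : (0:ℝ) < 2 ^ (s - 2 : ℝ) := Real.rpow_pos_of_pos (by norm_num) _
    rw [hC2]
    apply mul_pos (mul_pos hs0 (by linarith)) this
  refine ⟨max C1 C2, lt_max_of_lt_left hC1pos, ?_⟩
  intro θ hθ u v
  set n : ℝ := u - v with hn
  have hT1 : 0 ≤ br n ^ (s + θ) * br v ^ (-θ) :=
    mul_nonneg (Real.rpow_nonneg (br_pos n).le _) (Real.rpow_nonneg (br_pos v).le _)
  have hT2 : 0 ≤ br n ^ (2:ℝ) * br v ^ (s - 2) :=
    mul_nonneg (Real.rpow_nonneg (br_pos n).le _) (Real.rpow_nonneg (br_pos v).le _)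
  rcases le_total (br n) (br v) with hcase | hcase
  · -- Region II: Taylor
    have hnv : |n| ≤ |v| := by
      have h1 : 1 + n ^ 2 ≤ 1 + v ^ 2 := by
        have hc2 : Real.sqrt (1 + n ^ 2) ≤ Real.sqrt (1 + v ^ 2) := hcase
        have h := mul_self_le_mul_self (Real.sqrt_nonneg (1 + n ^ 2)) hc2
        rwa [Real.mul_self_sqrt (one_add_sq_pos n).le,
          Real.mul_self_sqrt (one_add_sq_pos v).le] at h
      have h2 : n ^ 2 ≤ v ^ 2 := by linarith
      calc |n| = Real.sqrt (n ^ 2) := (Real.sqrt_sq_eq_abs n).symm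
      _ ≤ Real.sqrt (v ^ 2) := Real.sqrt_le_sqrt h2
      _ = |v| := Real.sqrt_sq_eq_abs v
    have ht := taylor_bound hs v n
    have heq : phiF s (v + n) - phiF s v - n * psiF s v
        = br u ^ s - br v ^ s - s * (u - v) * v * br v ^ (s - 2) := by
      rw [show v + n = u by rw [hn]; ring]
      unfold phiF psiF
      rw [br_rpow, br_rpow, br_rpow]
      ring
    rw [heq] at ht
    have hR : s * (s - 1) * (1 + (|v| + |n|) ^ 2) ^ ((s - 2) / 2 : ℝ)
        ≤ C2 * br v ^ (s - 2) := by
      rw [hC2, br_rpow]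
      have h1 : (1 + (|v| + |n|) ^ 2) ^ ((s - 2) / 2 : ℝ)
          ≤ (4 * (1 + v ^ 2)) ^ ((s - 2) / 2 : ℝ) := by
        apply Real.rpow_le_rpow (by positivity) _ (by linarith)
        nlinarith [abs_nonneg v, abs_nonneg n, sq_abs v, sq_abs n]
      have h2 : ((4:ℝ) * (1 + v ^ 2)) ^ ((s - 2) / 2 : ℝ)
          = 2 ^ (s - 2 : ℝ) * (1 + v ^ 2) ^ ((s - 2) / 2 : ℝ) := by
        rw [Real.mul_rpow (by norm_num) (by positivity)]
        congr 1
        rw [show (4:ℝ) = (2:ℝ) ^ (2:ℝ) by norm_num [Real.rpow_natCast]]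
        rw [← Real.rpow_mul (by norm_num)]
        congr 1; ring
      calc s * (s - 1) * (1 + (|v| + |n|) ^ 2) ^ ((s - 2) / 2 : ℝ)
          ≤ s * (s - 1) * (4 * (1 + v ^ 2)) ^ ((s - 2) / 2 : ℝ) := by
            apply mul_le_mul_of_nonneg_left h1 (by nlinarith)
      _ = s * (s - 1) * 2 ^ (s - 2 : ℝ) * (1 + v ^ 2) ^ ((s - 2) / 2 : ℝ) := by
            rw [h2]; ring
    have hn2 : n ^ 2 ≤ br n ^ (2:ℝ) := by rw [br_sq]; linarith
    calc |br u ^ s - br v ^ s - s * (u - v) * v * br v ^ (s - 2)|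
        ≤ s * (s - 1) * (1 + (|v| + |n|) ^ 2) ^ ((s - 2) / 2 : ℝ) * n ^ 2 := ht
    _ ≤ (C2 * br v ^ (s - 2)) * br n ^ (2:ℝ) := by
        apply mul_le_mul hR hn2 (sq_nonneg n)
        exact mul_nonneg hC2pos.le (Real.rpow_nonneg (br_pos v).le _)
    _ = C2 * (br n ^ (2:ℝ) * br v ^ (s - 2)) := by ring
    _ ≤ max C1 C2 * (br n ^ (s + θ) * br v ^ (-θ)) + max C1 C2 * (br n ^ (2:ℝ) * br v ^ (s - 2)) := by
        have := mul_le_mul_of_nonneg_right (le_max_right C1 C2) hT2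
        have h0 : 0 ≤ max C1 C2 * (br n ^ (s + θ) * br v ^ (-θ)) :=
          mul_nonneg (le_of_lt (lt_max_of_lt_left hC1pos)) hT1
        linarith
  · -- Region I: direct
    have hvn : br v ^ 2 ≤ br n ^ 2 := by
      apply pow_le_pow_left₀ (br_pos v).le hcase
    have hv2n2 : v ^ 2 ≤ n ^ 2 := by
      have h1 := Real.sq_sqrt (one_add_sq_pos v).le
      have h2 := Real.sq_sqrt (one_add_sq_pos n).le
      unfold br at hvn
      nlinarith
    have hbu : br u ≤ 2 * br n := by
      have h1 : 1 + u ^ 2 ≤ 4 * (1 + n ^ 2) := by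
        have hu : u = n + v := by rw [hn]; ring
        have hu2 : u ^ 2 = (n + v) ^ 2 := by rw [hu]
        nlinarith [sq_nonneg (n - v), hv2n2, hu2]
      calc br u = Real.sqrt (1 + u ^ 2) := rfl
      _ ≤ Real.sqrt (4 * (1 + n ^ 2)) := Real.sqrt_le_sqrt h1
      _ = 2 * br n := by
          rw [show (4:ℝ) * (1 + n ^ 2) = 2 ^ 2 * (1 + n ^ 2) by norm_num,
            Real.sqrt_mul (by positivity), Real.sqrt_sq (by norm_num)]
          rfl
    have hbus : br u ^ s ≤ 2 ^ (s:ℝ) * br n ^ s := by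
      calc br u ^ s ≤ (2 * br n) ^ s := Real.rpow_le_rpow (br_pos u).le hbu hs0.le
      _ = 2 ^ (s:ℝ) * br n ^ s := Real.mul_rpow (by norm_num) (br_pos n).le
    have hbvs : br v ^ s ≤ br n ^ s := br_rpow_le hcase hs0.le
    have hcross : s * |u - v| * |v| * br v ^ (s - 2) ≤ s * br n ^ s := by
      have h1 : |u - v| ≤ br n := by rw [hn]; exact abs_le_br n
      have h2 : |v| * br v ^ (s - 2) ≤ br v ^ (s - 1 : ℝ) := by
        calc |v| * br v ^ (s - 2) ≤ br v * br v ^ (s - 2) :=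
          mul_le_mul_of_nonneg_right (abs_le_br v) (Real.rpow_nonneg (br_pos v).le _)
        _ = br v ^ (s - 1 : ℝ) := by
            rw [show (s - 1 : ℝ) = 1 + (s - 2) by ring, Real.rpow_add (br_pos v), Real.rpow_one]
      have h3 : br v ^ (s - 1 : ℝ) ≤ br n ^ (s - 1 : ℝ) := br_rpow_le hcase (by linarith)
      have h4 : br n * br n ^ (s - 1 : ℝ) = br n ^ s := by
        have h := Real.rpow_add (br_pos n) 1 (s - 1)
        rw [Real.rpow_one] at h
        rw [← h]
        congr 1; ring
      calc s * |u - v| * |v| * br v ^ (s - 2)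
          = s * (|u - v| * (|v| * br v ^ (s - 2))) := by ring
      _ ≤ s * (br n * br n ^ (s - 1 : ℝ)) := by
          apply mul_le_mul_of_nonneg_left _ hs0.le
          apply mul_le_mul h1 (h2.trans h3)
            (mul_nonneg (abs_nonneg v) (Real.rpow_nonneg (br_pos v).le _)) (br_pos n).le
      _ = s * br n ^ s := by rw [h4]
    have hmain : |br u ^ s - br v ^ s - s * (u - v) * v * br v ^ (s - 2)| ≤ C1 * br n ^ s := by
      have htri : |br u ^ s - br v ^ s - s * (u - v) * v * br v ^ (s - 2)|
          ≤ br u ^ s + br v ^ s + s * |u - v| * |v| * br v ^ (s - 2) := by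
        have h1 : |s * (u - v) * v * br v ^ (s - 2)| = s * |u-v| * |v| * br v ^ (s - 2) := by
          rw [abs_mul, abs_mul, abs_mul, abs_of_nonneg hs0.le,
            abs_of_nonneg (Real.rpow_nonneg (br_pos v).le _)]
        calc |br u ^ s - br v ^ s - s * (u - v) * v * br v ^ (s - 2)|
            ≤ |br u ^ s - br v ^ s| + |s * (u - v) * v * br v ^ (s - 2)| := abs_sub _ _
        _ ≤ |br u ^ s| + |br v ^ s| + s * |u-v| * |v| * br v ^ (s - 2) := by
            rw [h1]; linarith [abs_sub (br u ^ s) (br v ^ s)]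
        _ = br u ^ s + br v ^ s + s * |u-v| * |v| * br v ^ (s - 2) := by
            rw [abs_of_nonneg (Real.rpow_nonneg (br_pos u).le _),
              abs_of_nonneg (Real.rpow_nonneg (br_pos v).le _)]
      rw [hC1]
      calc |br u ^ s - br v ^ s - s * (u - v) * v * br v ^ (s - 2)|
          ≤ br u ^ s + br v ^ s + s * |u - v| * |v| * br v ^ (s - 2) := htri
      _ ≤ 2 ^ (s:ℝ) * br n ^ s + br n ^ s + s * br n ^ s := by linarith
      _ = (2 ^ (s:ℝ) + 1 + s) * br n ^ s := by ring
    have hsplit : br n ^ s ≤ br n ^ (s + θ) * br v ^ (-θ) := by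
      have h1 : br n ^ s = br n ^ (s + θ) * br n ^ (-θ) := by
        rw [← Real.rpow_add (br_pos n)]; congr 1; ring
      rw [h1]
      apply mul_le_mul_of_nonneg_left _ (Real.rpow_nonneg (br_pos n).le _)
      exact Real.rpow_le_rpow_of_nonpos (br_pos v) hcase (neg_nonpos.2 hθ)
    have h0 : 0 ≤ max C1 C2 * (br n ^ (2:ℝ) * br v ^ (s - 2)) :=
      mul_nonneg (le_of_lt (lt_max_of_lt_left hC1pos)) hT2
    calc |br u ^ s - br v ^ s - s * (u - v) * v * br v ^ (s - 2)|
        ≤ C1 * br n ^ s := hmain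
    _ ≤ max C1 C2 * (br n ^ (s + θ) * br v ^ (-θ)) := by
        apply mul_le_mul (le_max_left C1 C2) hsplit (Real.rpow_nonneg (br_pos n).le _)
          (le_of_lt (lt_max_of_lt_left hC1pos))
    _ ≤ _ := by linarith

lemma jb_eq_br (k : ℤ) : jb k = br (k : ℝ) := rfl

noncomputable def Jw (k : ℤ) : ℝ≥0∞ := ENNReal.ofReal (jb k)

lemma Jw_ne_top (k : ℤ) : Jw k ≠ ⊤ := ENNReal.ofReal_ne_top
lemma Jw_ne_zero (k : ℤ) : Jw k ≠ 0 := by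
  simp only [Jw, ne_eq, ENNReal.ofReal_eq_zero, not_le, jb_eq_br]
  exact br_pos _
lemma one_le_Jw (k : ℤ) : 1 ≤ Jw k := by
  rw [Jw, ← ENNReal.ofReal_one]
  exact ENNReal.ofReal_le_ofReal (one_le_br _)
lemma Jw_rpow (k : ℤ) (t : ℝ) : Jw k ^ t = ENNReal.ofReal (jb k ^ t) := by
  rw [Jw, jb_eq_br]
  exact ENNReal.ofReal_rpow_of_pos (br_pos _)

lemma sq_rpow (x : ℝ≥0∞) : x ^ (2:ℕ) = x ^ (2:ℝ) := by
  rw [← ENNReal.rpow_natCast]; norm_num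

lemma rpow_half_sq (x : ℝ≥0∞) : (x ^ (1/2:ℝ)) ^ (2:ℕ) = x := by
  rw [sq_rpow, ← ENNReal.rpow_mul]; norm_num

lemma sq_rpow_half (x : ℝ≥0∞) : (x ^ (2:ℕ)) ^ (1/2:ℝ) = x := by
  rw [sq_rpow, ← ENNReal.rpow_mul]; norm_num

noncomputable def Np (f : ℤ → ℝ≥0∞) : ℝ≥0∞ := (∑' k : ℤ, f k ^ (2:ℕ)) ^ (1/2:ℝ)

lemma tsum_CS (u v : ℤ → ℝ≥0∞) :
    ∑' k : ℤ, u k * v k ≤ Np u * Np v := by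
  have hpq : Real.HolderConjugate 2 2 := Real.holderConjugate_iff.mpr ⟨one_lt_two, by norm_num⟩
  have h := ENNReal.lintegral_mul_le_Lp_mul_Lq Measure.count hpq
    (measurable_of_countable u).aemeasurable (measurable_of_countable v).aemeasurable
  simp only [lintegral_count, Pi.mul_apply] at h
  unfold Np
  simp only [sq_rpow]
  exact h

lemma Np_add_le (f g : ℤ → ℝ≥0∞) : Np (fun k => f k + g k) ≤ Np f + Np g := by
  unfold Np
  simp only [sq_rpow]
  simp_rw [← lintegral_count]
  exact ENNReal.lintegral_Lp_add_le (measurable_of_countable f).aemeasurable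
    (measurable_of_countable g).aemeasurable one_le_two

lemma conv_comm (f g : ℤ → ℝ≥0∞) (k : ℤ) :
    ∑' k' : ℤ, f (k - k') * g k' = ∑' k' : ℤ, g (k - k') * f k' := by
  calc ∑' k' : ℤ, f (k - k') * g k'
      = ∑' c : ℤ, f (k - (k - c)) * g (k - c) := ((Equiv.subLeft k).tsum_eq _).symm
  _ = ∑' c : ℤ, g (k - c) * f c := by
      apply tsum_congr; intro c; rw [sub_sub_cancel, mul_comm]

lemma young (f g : ℤ → ℝ≥0∞) :
    Np (fun k => ∑' k' : ℤ, f (k - k') * g k') ≤ Np f * ∑' k' : ℤ, g k' := by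
  set G : ℝ≥0∞ := ∑' k' : ℤ, g k' with hG
  set F2 : ℝ≥0∞ := ∑' n : ℤ, f n ^ (2:ℕ) with hF2
  have hCS : ∀ k : ℤ, (∑' k' : ℤ, f (k - k') * g k') ^ (2:ℕ)
      ≤ (∑' k' : ℤ, f (k - k') ^ (2:ℕ) * g k') * G := by
    intro k
    have h1 : ∑' k' : ℤ, f (k - k') * g k'
        = ∑' k' : ℤ, (f (k - k') * g k' ^ (1/2:ℝ)) * g k' ^ (1/2:ℝ) := by
      apply tsum_congr; intro k'
      rw [mul_assoc, ← ENNReal.rpow_add_of_nonneg (1/2) (1/2) (by norm_num) (by norm_num)]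
      norm_num
    have h2 := tsum_CS (fun k' => f (k - k') * g k' ^ (1/2:ℝ)) (fun k' => g k' ^ (1/2:ℝ))
    rw [← h1] at h2
    have h3 := pow_le_pow_left₀ zero_le h2 2
    refine h3.trans ?_
    rw [mul_pow]
    unfold Np
    rw [rpow_half_sq, rpow_half_sq]
    apply le_of_eq
    congr 1
    · apply tsum_congr; intro k'
      simp only []
      rw [mul_pow, rpow_half_sq]
    · rw [hG]
      apply tsum_congr; intro k'
      simp only []
      rw [rpow_half_sq]
  have hsum : ∑' k : ℤ, (∑' k' : ℤ, f (k - k') * g k') ^ (2:ℕ) ≤ F2 * G * G := by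
    calc ∑' k : ℤ, (∑' k' : ℤ, f (k - k') * g k') ^ (2:ℕ)
        ≤ ∑' k : ℤ, (∑' k' : ℤ, f (k - k') ^ (2:ℕ) * g k') * G :=
          ENNReal.tsum_le_tsum hCS
    _ = (∑' k : ℤ, ∑' k' : ℤ, f (k - k') ^ (2:ℕ) * g k') * G := ENNReal.tsum_mul_right
    _ = (∑' k' : ℤ, ∑' k : ℤ, f (k - k') ^ (2:ℕ) * g k') * G := by rw [ENNReal.tsum_comm]
    _ = (∑' k' : ℤ, F2 * g k') * G := by
        congr 1
        apply tsum_congr; intro k'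
        rw [ENNReal.tsum_mul_right]
        congr 1
        exact (Equiv.subRight k').tsum_eq (fun n => f n ^ (2:ℕ))
    _ = F2 * G * G := by rw [ENNReal.tsum_mul_left]
  calc Np (fun k => ∑' k' : ℤ, f (k - k') * g k')
      ≤ (F2 * G * G) ^ (1/2:ℝ) := ENNReal.rpow_le_rpow hsum (by norm_num)
  _ = Np f * G := by
      rw [show F2 * G * G = F2 * G ^ (2:ℕ) by ring,
        ENNReal.mul_rpow_of_nonneg _ _ (by norm_num : (0:ℝ) ≤ 1/2), sq_rpow_half]
      rfl

lemma weighted_l1 (B : ℤ → ℝ≥0∞) (r t : ℝ) :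
    ∑' k : ℤ, Jw k ^ r * B k
      ≤ (∑' k : ℤ, Jw k ^ (2*(r - t)) ) ^ (1/2:ℝ) * Np (fun k => Jw k ^ t * B k) := by
  have h := tsum_CS (fun k => Jw k ^ (r - t)) (fun k => Jw k ^ t * B k)
  have h1 : ∀ k : ℤ, Jw k ^ (r - t) * (Jw k ^ t * B k) = Jw k ^ r * B k := by
    intro k
    rw [← mul_assoc, ← ENNReal.rpow_add _ _ (Jw_ne_zero k) (Jw_ne_top k)]
    congr 2; ring
  have h2 : ∀ k : ℤ, (Jw k ^ (r - t)) ^ (2:ℕ) = Jw k ^ (2*(r - t)) := by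
    intro k
    rw [sq_rpow, ← ENNReal.rpow_mul]
    congr 1; ring
  calc ∑' k : ℤ, Jw k ^ r * B k
      = ∑' k : ℤ, Jw k ^ (r - t) * (Jw k ^ t * B k) := by
        apply tsum_congr; intro k; rw [h1]
  _ ≤ Np (fun k => Jw k ^ (r - t)) * Np (fun k => Jw k ^ t * B k) := h
  _ = (∑' k : ℤ, Jw k ^ (2*(r - t))) ^ (1/2:ℝ) * Np (fun k => Jw k ^ t * B k) := by
      unfold Np; congr 2; apply tsum_congr; intro k; rw [h2]

lemma sumJw_ne_top {p : ℝ} (hp : 1 < p) : (∑' k : ℤ, Jw k ^ (-p : ℝ)) ≠ ⊤ := by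
  have hnn : ∀ k : ℤ, 0 ≤ jb k ^ (-p:ℝ) := fun k => Real.rpow_nonneg (br_pos _).le _
  have hsum : Summable (fun k : ℤ => jb k ^ (-p:ℝ)) := by
    have hg2 : Summable (fun k : ℤ => if k = 0 then (1:ℝ) else 0) := by
      apply summable_of_ne_finset_zero (s := {(0:ℤ)})
      intro k hk
      simp only [Finset.mem_singleton] at hk
      simp [hk]
    apply Summable.of_nonneg_of_le hnn _ ((Real.summable_abs_int_rpow hp).add hg2)
    intro k
    rcases eq_or_ne k 0 with hk | hk
    · subst hk
      simp only [if_pos rfl]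
      have h1 : jb (0:ℤ) = 1 := by
        simp [jb_eq_br, br]
      rw [h1, Real.one_rpow, Int.cast_zero, abs_zero, Real.zero_rpow (by linarith : -p ≠ 0)]
      norm_num
    · have h1 : (0:ℝ) < |(k:ℝ)| := by
        simp only [abs_pos, ne_eq, Int.cast_eq_zero]
        exact hk
      have h2 : jb k ^ (-p:ℝ) ≤ |(k:ℝ)| ^ (-p:ℝ) := by
        rw [jb_eq_br]
        exact Real.rpow_le_rpow_of_nonpos h1 (abs_le_br _) (by linarith)
      rw [if_neg hk, add_zero]
      exact h2
  have : ∑' k : ℤ, Jw k ^ (-p:ℝ) = ENNReal.ofReal (∑' k : ℤ, jb k ^ (-p:ℝ)) := by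
    rw [ENNReal.ofReal_tsum_of_nonneg hnn hsum]
    apply tsum_congr; intro k; rw [Jw_rpow]
  rw [this]
  exact ENNReal.ofReal_ne_top

lemma l2_eq (t : ℝ) (a : ℤ → ℂ) :
    l2 t a = Np (fun k => Jw k ^ t * ENNReal.ofReal ‖a k‖) := by
  unfold l2 Np
  congr 1
  apply tsum_congr; intro k
  rw [mul_pow, sq_rpow (Jw k ^ t), ← ENNReal.rpow_mul, Jw_rpow,
    ← ENNReal.ofReal_pow (norm_nonneg _),
    ← ENNReal.ofReal_mul (show (0:ℝ) ≤ jb k ^ (t * 2) from Real.rpow_nonneg (Real.sqrt_nonneg _) _),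
    mul_comm (2:ℝ) t]

lemma Np_mono {u v : ℤ → ℝ≥0∞} (h : ∀ k, u k ≤ v k) : Np u ≤ Np v := by
  apply ENNReal.rpow_le_rpow _ (by norm_num)
  exact ENNReal.tsum_le_tsum (fun k => pow_le_pow_left₀ zero_le (h k) 2)

lemma Np_const_mul (c : ℝ≥0∞) (f : ℤ → ℝ≥0∞) : Np (fun k => c * f k) = c * Np f := by
  unfold Np
  simp_rw [mul_pow, ENNReal.tsum_mul_left]
  rw [ENNReal.mul_rpow_of_nonneg _ _ (by norm_num : (0:ℝ) ≤ 1/2), sq_rpow_half]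

lemma l2_zero_eq (K : ℤ → ℂ) : l2 0 K = Np (fun k => ENNReal.ofReal ‖K k‖) := by
  rw [l2_eq]
  unfold Np
  congr 1
  apply tsum_congr; intro k
  simp [ENNReal.rpow_zero]

lemma ofReal_norm_tsum_le (c : ℤ → ℂ) :
    ENNReal.ofReal ‖∑' k' : ℤ, c k'‖ ≤ ∑' k' : ℤ, ENNReal.ofReal ‖c k'‖ := by
  by_cases h : Summable (fun k' => ‖c k'‖)
  · calc ENNReal.ofReal ‖∑' k' : ℤ, c k'‖
        ≤ ENNReal.ofReal (∑' k' : ℤ, ‖c k'‖) :=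
          ENNReal.ofReal_le_ofReal (norm_tsum_le_tsum_norm h)
    _ = ∑' k' : ℤ, ENNReal.ofReal ‖c k'‖ :=
          ENNReal.ofReal_tsum_of_nonneg (fun _ => norm_nonneg _) h
  · rw [tsum_eq_zero_of_not_summable (fun hc => h (summable_norm_iff.mpr hc))]
    simp

/-- Refined Kato–Ponce commutator estimate (Fourier-coefficient form), `s > 2`:
the `L²` bound for `C_s(f)(g) = ⟨D⟩^s(fg) − f⟨D⟩^s g + s(∂ₓf)⟨D⟩^{s−2}∂ₓg`. -/
theorem refined_commutator_estimate (s ε : ℝ) (hs : 2 < s) (hε : 0 < ε) :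
    ∃ C : ℝ, 0 < C ∧ ∀ a b : ℤ → ℂ,
      l2 0 (fun k => ∑' k' : ℤ,
          Complex.ofReal
              (jb k ^ s - jb k' ^ s - s * ((k : ℝ) - (k' : ℝ)) * (k' : ℝ) * jb k' ^ (s - 2)) *
            a (k - k') * b k')
        ≤ ENNReal.ofReal C *
          (l2 (max s (5 / 2 + ε)) a * l2 (min (s - 2) (1 / 2 + ε)) b +
            l2 (5 / 2 + ε) a * l2 (s - 2) b) := by
  obtain ⟨Cm, hCmpos, hmb⟩ := symbol_bound_real hs
  set t0 : ℝ := min (s - 2) (1 / 2 + ε) with ht0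
  set σa : ℝ := max s (5 / 2 + ε) with hσa
  set θ : ℝ := σa - s with hθdef
  have hθ : 0 ≤ θ := sub_nonneg.2 (le_max_left _ _)
  have hsθ : s + θ = σa := by rw [hθdef]; ring
  have hp1 : 1 < 2 * (θ + t0) := by
    rcases le_total (s - 2) (1 / 2 + ε) with h | h
    · have h1 : t0 = s - 2 := min_eq_left h
      have h2 : 5 / 2 + ε ≤ σa := le_max_right _ _
      rw [h1, hθdef]; linarith
    · have h1 : t0 = 1 / 2 + ε := min_eq_right h
      rw [h1]; linarith
  have hS1top : (∑' k : ℤ, Jw k ^ (2 * (-θ - t0) : ℝ)) ≠ ⊤ := by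
    have he : ∀ k : ℤ, Jw k ^ (2 * (-θ - t0) : ℝ) = Jw k ^ (-(2 * (θ + t0)) : ℝ) := by
      intro k; congr 1; ring
    rw [tsum_congr he]
    exact sumJw_ne_top hp1
  have hS2top : (∑' k : ℤ, Jw k ^ (2 * (2 - (5 / 2 + ε)) : ℝ)) ≠ ⊤ := by
    have he : ∀ k : ℤ, Jw k ^ (2 * (2 - (5 / 2 + ε)) : ℝ) = Jw k ^ (-(1 + 2 * ε) : ℝ) := by
      intro k; congr 1; ring
    rw [tsum_congr he]
    exact sumJw_ne_top (by linarith)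
  set S1 : ℝ≥0∞ := (∑' k : ℤ, Jw k ^ (2 * (-θ - t0) : ℝ)) ^ (1/2 : ℝ) with hS1def
  set S2 : ℝ≥0∞ := (∑' k : ℤ, Jw k ^ (2 * (2 - (5 / 2 + ε)) : ℝ)) ^ (1/2 : ℝ) with hS2def
  have hS1 : S1 ≠ ⊤ := ENNReal.rpow_ne_top_of_nonneg (by norm_num) hS1top
  have hS2 : S2 ≠ ⊤ := ENNReal.rpow_ne_top_of_nonneg (by norm_num) hS2top
  set S : ℝ := max S1.toReal S2.toReal with hSdef
  have hS0 : 0 ≤ S := le_trans ENNReal.toReal_nonneg (le_max_left _ _)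
  have hS1le : S1 ≤ ENNReal.ofReal S := by
    rw [← ENNReal.ofReal_toReal hS1]
    exact ENNReal.ofReal_le_ofReal (le_max_left _ _)
  have hS2le : S2 ≤ ENNReal.ofReal S := by
    rw [← ENNReal.ofReal_toReal hS2]
    exact ENNReal.ofReal_le_ofReal (le_max_right _ _)
  refine ⟨Cm * S + 1, by positivity, ?_⟩
  intro a b
  set CmE : ℝ≥0∞ := ENNReal.ofReal Cm with hCmE
  set F1 : ℤ → ℝ≥0∞ := fun n => Jw n ^ (σa : ℝ) * ENNReal.ofReal ‖a n‖ with hF1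
  set G1 : ℤ → ℝ≥0∞ := fun n => Jw n ^ (-θ : ℝ) * ENNReal.ofReal ‖b n‖ with hG1
  set F2 : ℤ → ℝ≥0∞ := fun n => Jw n ^ (2 : ℝ) * ENNReal.ofReal ‖a n‖ with hF2
  set G2 : ℤ → ℝ≥0∞ := fun n => Jw n ^ (s - 2 : ℝ) * ENNReal.ofReal ‖b n‖ with hG2
  -- pointwise bound
  have hpt : ∀ k : ℤ, ENNReal.ofReal ‖∑' k' : ℤ,
      Complex.ofReal
        (jb k ^ s - jb k' ^ s - s * ((k : ℝ) - (k' : ℝ)) * (k' : ℝ) * jb k' ^ (s - 2)) *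
        a (k - k') * b k'‖
      ≤ CmE * ((∑' k' : ℤ, F1 (k - k') * G1 k') + (∑' k' : ℤ, F2 (k - k') * G2 k')) := by
    intro k
    refine (ofReal_norm_tsum_le _).trans ?_
    have hterm : ∀ k' : ℤ, ENNReal.ofReal ‖Complex.ofReal
        (jb k ^ s - jb k' ^ s - s * ((k : ℝ) - (k' : ℝ)) * (k' : ℝ) * jb k' ^ (s - 2)) *
        a (k - k') * b k'‖
        ≤ CmE * (F1 (k - k') * G1 k') + CmE * (F2 (k - k') * G2 k') := by
      intro k'
      have hcast : ((k - k' : ℤ) : ℝ) = (k : ℝ) - (k' : ℝ) := by push_cast; ring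
      have e1 : ∀ t : ℝ, ENNReal.ofReal (br ((k:ℝ) - (k':ℝ)) ^ t) = Jw (k - k') ^ t := by
        intro t; rw [Jw_rpow, jb_eq_br, hcast]
      have e2 : ∀ t : ℝ, ENNReal.ofReal (br (k':ℝ) ^ t) = Jw k' ^ t := by
        intro t; rw [Jw_rpow, jb_eq_br]
      set mv : ℝ := jb k ^ s - jb k' ^ s - s * ((k : ℝ) - (k' : ℝ)) * (k' : ℝ) * jb k' ^ (s - 2)
        with hmv
      have hsb := hmb θ hθ (k : ℝ) (k' : ℝ)
      rw [← jb_eq_br k, ← jb_eq_br k'] at hsb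
      rw [← hmv] at hsb
      have hnorm : ‖Complex.ofReal mv * a (k - k') * b k'‖
          = |mv| * (‖a (k - k')‖ * ‖b k'‖) := by
        rw [norm_mul, norm_mul, Complex.norm_real, Real.norm_eq_abs, mul_assoc]
      have hT1nn : (0:ℝ) ≤ br ((k:ℝ) - (k':ℝ)) ^ (s + θ) * br (k':ℝ) ^ (-θ) :=
        mul_nonneg (Real.rpow_nonneg (br_pos _).le _) (Real.rpow_nonneg (br_pos _).le _)
      have hT2nn : (0:ℝ) ≤ br ((k:ℝ) - (k':ℝ)) ^ (2:ℝ) * br (k':ℝ) ^ (s - 2) :=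
        mul_nonneg (Real.rpow_nonneg (br_pos _).le _) (Real.rpow_nonneg (br_pos _).le _)
      calc ENNReal.ofReal ‖Complex.ofReal mv * a (k - k') * b k'‖
          = ENNReal.ofReal |mv| * (ENNReal.ofReal ‖a (k - k')‖ * ENNReal.ofReal ‖b k'‖) := by
            rw [hnorm, ENNReal.ofReal_mul (abs_nonneg _), ENNReal.ofReal_mul (norm_nonneg _)]
      _ ≤ (CmE * (Jw (k - k') ^ (σa:ℝ) * Jw k' ^ (-θ:ℝ))
            + CmE * (Jw (k - k') ^ (2:ℝ) * Jw k' ^ (s - 2:ℝ)))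
            * (ENNReal.ofReal ‖a (k - k')‖ * ENNReal.ofReal ‖b k'‖) := by
            apply mul_le_mul_left
            calc ENNReal.ofReal |mv|
                ≤ ENNReal.ofReal (Cm * (br ((k:ℝ) - (k':ℝ)) ^ (s + θ) * br (k':ℝ) ^ (-θ))
                  + Cm * (br ((k:ℝ) - (k':ℝ)) ^ (2:ℝ) * br (k':ℝ) ^ (s - 2))) :=
                  ENNReal.ofReal_le_ofReal hsb
            _ = CmE * (Jw (k - k') ^ (σa:ℝ) * Jw k' ^ (-θ:ℝ))
                  + CmE * (Jw (k - k') ^ (2:ℝ) * Jw k' ^ (s - 2:ℝ)) := by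
                  rw [ENNReal.ofReal_add (mul_nonneg hCmpos.le hT1nn) (mul_nonneg hCmpos.le hT2nn),
                    ENNReal.ofReal_mul hCmpos.le, ENNReal.ofReal_mul hCmpos.le,
                    ENNReal.ofReal_mul (Real.rpow_nonneg (br_pos _).le _),
                    ENNReal.ofReal_mul (Real.rpow_nonneg (br_pos _).le _),
                    e1, e1, e2, e2, hsθ]
      _ = CmE * (F1 (k - k') * G1 k') + CmE * (F2 (k - k') * G2 k') := by
            rw [hF1, hG1, hF2, hG2]
            ring
    refine (ENNReal.tsum_le_tsum hterm).trans ?_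
    rw [ENNReal.tsum_add, ENNReal.tsum_mul_left, ENNReal.tsum_mul_left, ← mul_add]
  -- assemble
  have hc1 : Np (fun k => ∑' k' : ℤ, F1 (k - k') * G1 k') ≤ l2 σa a * (S1 * l2 t0 b) := by
    refine (young F1 G1).trans ?_
    apply mul_le_mul'
    · apply le_of_eq
      rw [l2_eq σa a, hF1]
    · have hw := weighted_l1 (fun n => ENNReal.ofReal ‖b n‖) (-θ) t0
      calc ∑' k' : ℤ, G1 k' = ∑' k : ℤ, Jw k ^ (-θ:ℝ) * ENNReal.ofReal ‖b k‖ := by rw [hG1]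
      _ ≤ (∑' k : ℤ, Jw k ^ (2 * (-θ - t0) : ℝ)) ^ (1/2:ℝ)
            * Np (fun k => Jw k ^ (t0:ℝ) * ENNReal.ofReal ‖b k‖) := hw
      _ = S1 * l2 t0 b := by rw [← hS1def, ← l2_eq]
  have hc2 : Np (fun k => ∑' k' : ℤ, F2 (k - k') * G2 k') ≤ l2 (s - 2) b * (S2 * l2 (5 / 2 + ε) a) := by
    have hcomm : (fun k => ∑' k' : ℤ, F2 (k - k') * G2 k')
        = (fun k => ∑' k' : ℤ, G2 (k - k') * F2 k') := funext fun k => conv_comm F2 G2 k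
    rw [hcomm]
    refine (young G2 F2).trans ?_
    apply mul_le_mul'
    · apply le_of_eq
      rw [l2_eq (s - 2) b, hG2]
    · have hw := weighted_l1 (fun n => ENNReal.ofReal ‖a n‖) 2 (5 / 2 + ε)
      calc ∑' k' : ℤ, F2 k' = ∑' k : ℤ, Jw k ^ (2:ℝ) * ENNReal.ofReal ‖a k‖ := by rw [hF2]
      _ ≤ (∑' k : ℤ, Jw k ^ (2 * (2 - (5 / 2 + ε)) : ℝ)) ^ (1/2:ℝ)
            * Np (fun k => Jw k ^ (5 / 2 + ε : ℝ) * ENNReal.ofReal ‖a k‖) := hw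
      _ = S2 * l2 (5 / 2 + ε) a := by rw [← hS2def, ← l2_eq]
  calc l2 0 (fun k => ∑' k' : ℤ,
        Complex.ofReal
          (jb k ^ s - jb k' ^ s - s * ((k : ℝ) - (k' : ℝ)) * (k' : ℝ) * jb k' ^ (s - 2)) *
        a (k - k') * b k')
      = Np (fun k => ENNReal.ofReal ‖∑' k' : ℤ,
          Complex.ofReal
            (jb k ^ s - jb k' ^ s - s * ((k : ℝ) - (k' : ℝ)) * (k' : ℝ) * jb k' ^ (s - 2)) *
          a (k - k') * b k'‖) := l2_zero_eq _
  _ ≤ Np (fun k => CmE * ((∑' k' : ℤ, F1 (k - k') * G1 k') + (∑' k' : ℤ, F2 (k - k') * G2 k'))) :=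
        Np_mono hpt
  _ = CmE * Np (fun k => (∑' k' : ℤ, F1 (k - k') * G1 k') + (∑' k' : ℤ, F2 (k - k') * G2 k')) :=
        Np_const_mul _ _
  _ ≤ CmE * (Np (fun k => ∑' k' : ℤ, F1 (k - k') * G1 k')
        + Np (fun k => ∑' k' : ℤ, F2 (k - k') * G2 k')) :=
        mul_le_mul' le_rfl (Np_add_le _ _)
  _ ≤ CmE * (l2 σa a * (S1 * l2 t0 b) + l2 (s - 2) b * (S2 * l2 (5 / 2 + ε) a)) :=
        mul_le_mul' le_rfl (add_le_add hc1 hc2)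
  _ ≤ CmE * (ENNReal.ofReal S * (l2 σa a * l2 t0 b)
        + ENNReal.ofReal S * (l2 (5 / 2 + ε) a * l2 (s - 2) b)) := by
        apply mul_le_mul' le_rfl
        apply add_le_add
        · have he : l2 σa a * (S1 * l2 t0 b) = S1 * (l2 σa a * l2 t0 b) := by ring
          rw [he]
          exact mul_le_mul_left hS1le _
        · have he : l2 (s - 2) b * (S2 * l2 (5 / 2 + ε) a)
              = S2 * (l2 (5 / 2 + ε) a * l2 (s - 2) b) := by ring
          rw [he]
          exact mul_le_mul_left hS2le _
  _ = ENNReal.ofReal (Cm * S) * (l2 σa a * l2 t0 b + l2 (5 / 2 + ε) a * l2 (s - 2) b) := by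
        rw [← mul_add, ← mul_assoc, hCmE, ← ENNReal.ofReal_mul hCmpos.le]
  _ ≤ ENNReal.ofReal (Cm * S + 1)
        * (l2 σa a * l2 t0 b + l2 (5 / 2 + ε) a * l2 (s - 2) b) :=
        mul_le_mul_left (ENNReal.ofReal_le_ofReal (by linarith)) _
end

section
/- Let s ≥ 0 and ε > 0. Then there exists a constant C > 0 (depending only on s and ε) such that for all sequences a, b : ℤ → ℂ, the sequence I(k) := Σ_{k'∈ℤ, k'≠0, |k'| ≥ 2|k|} (⟨k⟩^s − ⟨k'⟩^s) · (i k') · a(k−k') · b(k') satisfies ‖I‖_{ℓ²} ≤ C ‖a‖_{ℓ²_{3/2+ε}} ‖b‖_{ℓ²_s}. -/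
open scoped ENNReal

set_option maxHeartbeats 1000000

lemma jb_nonneg (k : ℤ) : 0 ≤ jb k := Real.sqrt_nonneg _

lemma one_le_jb (k : ℤ) : 1 ≤ jb k := by
  have : (1:ℝ) = Real.sqrt 1 := by simp
  rw [this, jb]; exact Real.sqrt_le_sqrt (by nlinarith [sq_nonneg (k:ℝ)])

lemma jb_pos (k : ℤ) : 0 < jb k := lt_of_lt_of_le one_pos (one_le_jb k)

lemma jb_mono {k k' : ℤ} (h : |k| ≤ |k'|) : jb k ≤ jb k' := by
  have h' : |(k:ℝ)| ≤ |(k':ℝ)| := by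
    rw [← Int.cast_abs, ← Int.cast_abs]; exact_mod_cast h
  apply Real.sqrt_le_sqrt
  nlinarith [sq_abs (k:ℝ), sq_abs (k':ℝ), abs_nonneg (k:ℝ)]

lemma abs_le_jb (k : ℤ) : |(k:ℝ)| ≤ jb k := by
  rw [jb, ← Real.sqrt_sq_eq_abs]
  exact Real.sqrt_le_sqrt (by nlinarith)

lemma jb_le_two_jb {k k' : ℤ} (h : 2 * |k| ≤ |k'|) : jb k' ≤ 2 * jb (k - k') := by
  have h' : 2 * |(k:ℝ)| ≤ |(k':ℝ)| := by
    have h0 : ((2*|k| : ℤ) : ℝ) ≤ ((|k'| : ℤ) : ℝ) := Int.cast_le.mpr h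
    push_cast [Int.cast_abs] at h0
    exact h0
  have h2 : |(k':ℝ)| - |(k:ℝ)| ≤ |(k:ℝ) - (k':ℝ)| := by
    rw [abs_sub_comm]; exact abs_sub_abs_le_abs_sub _ _
  have h3 : |(k':ℝ)| / 2 ≤ |(k:ℝ) - (k':ℝ)| := by linarith [abs_nonneg (k:ℝ)]
  have h4 : ((k':ℝ))^2 / 4 ≤ ((k:ℝ) - (k':ℝ))^2 := by
    nlinarith [sq_abs ((k:ℝ) - (k':ℝ)), sq_abs (k':ℝ), abs_nonneg ((k:ℝ) - (k':ℝ)), abs_nonneg (k':ℝ)]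
  rw [jb, jb]
  have h5 : Real.sqrt (4 * (1 + ((k:ℝ) - (k':ℝ))^2)) = 2 * Real.sqrt (1 + ((k:ℝ)-(k':ℝ))^2) := by
    rw [Real.sqrt_mul (by norm_num), show (4:ℝ) = 2^2 by norm_num, Real.sqrt_sq (by norm_num)]
  push_cast
  rw [← h5]
  exact Real.sqrt_le_sqrt (by nlinarith)

lemma jb_neg (m : ℤ) : jb (-m) = jb m := by simp [jb]

lemma jb_half_ge (n : ℕ) : ((n:ℝ) + 1) / 2 ≤ jb n := by
  rw [jb]
  have h : ((n:ℝ)+1)/2 = Real.sqrt ((((n:ℝ)+1)/2)^2) := by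
    rw [Real.sqrt_sq (by positivity)]
  rw [h]
  apply Real.sqrt_le_sqrt
  have : (0:ℝ) ≤ n := by positivity
  push_cast
  nlinarith

lemma summable_jb_neg {t : ℝ} (ht : 1 < t) : Summable (fun m : ℤ => jb m ^ (-t)) := by
  have hnat : Summable (fun n : ℕ => jb n ^ (-t)) := by
    have h1 : Summable (fun n : ℕ => ((n:ℝ)) ^ (-t)) := Real.summable_nat_rpow.2 (by linarith)
    have h2 : Summable (fun n : ℕ => ((n:ℝ) + 1) ^ (-t)) := by
      have := (summable_nat_add_iff 1).2 h1
      apply this.congr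
      intro n; push_cast; ring_nf
    have h3 : Summable (fun n : ℕ => ((n:ℝ) + 1) ^ (-t) * (2:ℝ) ^ t) := h2.mul_right _
    apply h3.of_nonneg_of_le (fun n => Real.rpow_nonneg (jb_nonneg _) _)
    intro n
    have hb : (((n:ℝ)+1)/2) ^ (-t) = ((n:ℝ)+1)^(-t) * (2:ℝ)^t := by
      rw [Real.div_rpow (by positivity) (by norm_num), Real.rpow_neg (by norm_num : (0:ℝ) ≤ 2)]
      field_simp
    rw [← hb]
    exact Real.rpow_le_rpow_of_nonpos (by positivity) (jb_half_ge n) (by linarith)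
  apply Summable.of_nat_of_neg_add_one hnat
  have := (summable_nat_add_iff 1).2 hnat
  apply this.congr
  intro n
  rw [show (-(↑n + 1) : ℤ) = -((n+1 : ℕ) : ℤ) by push_cast; ring, jb_neg]

lemma enorm_tsum {ι : Type*} [Countable ι] (f : ι → ℂ) :
    (‖∑' i, f i‖₊ : ℝ≥0∞) ≤ ∑' i, (‖f i‖₊ : ℝ≥0∞) := by
  by_cases h : Summable fun i => ‖f i‖₊
  · rw [← ENNReal.coe_tsum h]
    exact_mod_cast nnnorm_tsum_le h
  · have htop : (∑' i, (‖f i‖₊ : ℝ≥0∞)) = ⊤ := by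
      by_contra h'
      exact h (ENNReal.tsum_coe_ne_top_iff_summable.1 h')
    rw [htop]; exact le_top

lemma cs (f g : ℤ → ℝ≥0∞) :
    (∑' m, f m * g m) ≤ (∑' m, f m ^ 2) ^ (1/2:ℝ) * (∑' m, g m ^ 2) ^ (1/2:ℝ) := by
  have hconj : Real.HolderConjugate 2 2 := by rw [Real.holderConjugate_iff]; norm_num
  have := ENNReal.lintegral_mul_le_Lp_mul_Lq MeasureTheory.Measure.count hconj
    (measurable_of_countable f).aemeasurable (measurable_of_countable g).aemeasurable
  simpa [MeasureTheory.lintegral_count, ENNReal.rpow_two, Pi.mul_apply] using this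

lemma half_sq (x : ℝ≥0∞) : (x ^ (1/2:ℝ)) ^ 2 = x := by
  rw [← ENNReal.rpow_two, ← ENNReal.rpow_mul]; norm_num

lemma sq_half (x : ℝ≥0∞) : (x ^ 2) ^ (1/2:ℝ) = x := by
  rw [← ENNReal.rpow_two, ← ENNReal.rpow_mul]; norm_num

/-- High-output-frequency piece (region `|k'| ≥ 2|k|`) of the commutator, `s ≥ 0`:
`‖I‖_{ℓ²} ≤ C ‖a‖_{ℓ²_{3/2+ε}} ‖b‖_{ℓ²_s}`. -/
theorem commutator_high_piece (s ε : ℝ) (hs : 0 ≤ s) (hε : 0 < ε) :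
    ∃ C : ℝ, 0 < C ∧ ∀ a b : ℤ → ℂ,
      l2 0 (fun k => ∑' k' : {m : ℤ // m ≠ 0 ∧ 2 * |k| ≤ |m|},
          Complex.ofReal (jb k ^ s - jb k'.1 ^ s) * (Complex.I * (k'.1 : ℂ)) *
            a (k - k'.1) * b k'.1)
        ≤ ENNReal.ofReal C * (l2 (3 / 2 + ε) a * l2 s b) := by
  -- the weight sum
  have hsum : Summable (fun m : ℤ => jb m ^ (-(1+2*ε))) := summable_jb_neg (by linarith)
  set σ : ℝ := ∑' m : ℤ, jb m ^ (-(1+2*ε)) with hσdef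
  have hσ0 : 0 ≤ σ := tsum_nonneg (fun m => Real.rpow_nonneg (jb_nonneg m) _)
  refine ⟨2 * σ ^ (1/2:ℝ) + 1, by positivity, ?_⟩
  intro a b
  set A : ℤ → ℝ≥0∞ := fun m => ENNReal.ofReal (jb m * ‖a m‖) with hA
  set B : ℤ → ℝ≥0∞ := fun m => ENNReal.ofReal (jb m ^ s * ‖b m‖) with hB
  set K : ℝ≥0∞ := ∑' m, A m with hK
  set S2 : ℝ≥0∞ := ∑' m, (B m)^2 with hS2
  set T : ℤ → ℂ := fun k => ∑' k' : {m : ℤ // m ≠ 0 ∧ 2 * |k| ≤ |m|},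
          Complex.ofReal (jb k ^ s - jb k'.1 ^ s) * (Complex.I * (k'.1 : ℂ)) *
            a (k - k'.1) * b k'.1 with hT
  -- pointwise bound on each term
  have hterm : ∀ (k : ℤ) (k' : {m : ℤ // m ≠ 0 ∧ 2 * |k| ≤ |m|}),
      (‖Complex.ofReal (jb k ^ s - jb k'.1 ^ s) * (Complex.I * (k'.1 : ℂ)) *
            a (k - k'.1) * b k'.1‖₊ : ℝ≥0∞) ≤ 2 * A (k - k'.1) * B k'.1 := by
    rintro k ⟨k', hk0, hk⟩
    have habs : |k| ≤ |k'| := by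
      have := abs_nonneg k; omega
    have hjb : jb k ≤ jb k' := jb_mono habs
    have hrp : jb k ^ s ≤ jb k' ^ s := Real.rpow_le_rpow (jb_nonneg k) hjb hs
    have h0k : 0 ≤ jb k ^ s := Real.rpow_nonneg (jb_nonneg k) s
    have h0k' : 0 ≤ jb k' ^ s := Real.rpow_nonneg (jb_nonneg k') s
    have h1 : |jb k ^ s - jb k' ^ s| ≤ jb k' ^ s := by
      rw [abs_le]
      constructor
      · linarith
      · linarith
    have h2 : |(k':ℝ)| ≤ 2 * jb (k - k') := le_trans (abs_le_jb k') (jb_le_two_jb hk)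
    have hnorm : ‖Complex.ofReal (jb k ^ s - jb k' ^ s) * (Complex.I * (k' : ℂ)) *
            a (k - k') * b k'‖
        ≤ 2 * (jb (k - k') * ‖a (k - k')‖) * (jb k' ^ s * ‖b k'‖) := by
      have hre : ‖Complex.ofReal (jb k ^ s - jb k' ^ s) * (Complex.I * (k' : ℂ)) *
            a (k - k') * b k'‖ = |jb k ^ s - jb k' ^ s| * |(k':ℝ)| * ‖a (k - k')‖ * ‖b k'‖ := by
        simp only [norm_mul, Complex.norm_real, Complex.norm_I, Complex.norm_intCast,
          Real.norm_eq_abs, one_mul]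
      rw [hre]
      calc |jb k ^ s - jb k' ^ s| * |(k':ℝ)| * ‖a (k - k')‖ * ‖b k'‖
          ≤ (jb k' ^ s) * (2 * jb (k - k')) * ‖a (k - k')‖ * ‖b k'‖ := by
            apply mul_le_mul_of_nonneg_right _ (norm_nonneg _)
            apply mul_le_mul_of_nonneg_right _ (norm_nonneg _)
            exact mul_le_mul h1 h2 (abs_nonneg _) h0k'
        _ = 2 * (jb (k - k') * ‖a (k - k')‖) * (jb k' ^ s * ‖b k'‖) := by ring
    calc (‖Complex.ofReal (jb k ^ s - jb k' ^ s) * (Complex.I * (k' : ℂ)) *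
            a (k - k') * b k'‖₊ : ℝ≥0∞)
        = ENNReal.ofReal ‖Complex.ofReal (jb k ^ s - jb k' ^ s) * (Complex.I * (k' : ℂ)) *
            a (k - k') * b k'‖ := (ofReal_norm _).symm
      _ ≤ ENNReal.ofReal (2 * (jb (k - k') * ‖a (k - k')‖) * (jb k' ^ s * ‖b k'‖)) :=
          ENNReal.ofReal_le_ofReal hnorm
      _ = 2 * A (k - k') * B k' := by
          rw [ENNReal.ofReal_mul (by
            have := jb_nonneg (k - k')
            have := norm_nonneg (a (k - k'))
            positivity), ENNReal.ofReal_mul (by norm_num)]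
          simp [hA, hB]
  -- per-k bound
  have hk1 : ∀ k : ℤ, (‖T k‖₊ : ℝ≥0∞) ≤ 2 * ∑' m : ℤ, A (k - m) * B m := by
    intro k
    calc (‖T k‖₊ : ℝ≥0∞) ≤ ∑' k' : {m : ℤ // m ≠ 0 ∧ 2 * |k| ≤ |m|},
          (‖Complex.ofReal (jb k ^ s - jb k'.1 ^ s) * (Complex.I * (k'.1 : ℂ)) *
            a (k - k'.1) * b k'.1‖₊ : ℝ≥0∞) := enorm_tsum _
      _ ≤ ∑' k' : {m : ℤ // m ≠ 0 ∧ 2 * |k| ≤ |m|}, 2 * A (k - k'.1) * B k'.1 :=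
          ENNReal.tsum_le_tsum (hterm k)
      _ ≤ ∑' m : ℤ, 2 * A (k - m) * B m :=
          ENNReal.tsum_comp_le_tsum_of_injective Subtype.val_injective
            (fun m => 2 * A (k - m) * B m)
      _ = 2 * ∑' m : ℤ, A (k - m) * B m := by
          simp_rw [mul_assoc]
          exact ENNReal.tsum_mul_left
  -- Cauchy-Schwarz per k
  have hk2 : ∀ k : ℤ, (∑' m : ℤ, A (k - m) * B m)
      ≤ K ^ (1/2:ℝ) * (∑' m : ℤ, A (k - m) * (B m)^2) ^ (1/2:ℝ) := by
    intro k
    have hcs := cs (fun m => (A (k - m)) ^ (1/2:ℝ)) (fun m => (A (k - m)) ^ (1/2:ℝ) * B m)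
    have e1 : ∀ m : ℤ, (A (k-m)) ^ (1/2:ℝ) * ((A (k-m)) ^ (1/2:ℝ) * B m) = A (k-m) * B m := by
      intro m
      rw [← mul_assoc, ← sq, half_sq]
    have e2 : ∀ m : ℤ, ((A (k-m)) ^ (1/2:ℝ))^2 = A (k - m) := fun m => half_sq _
    have e3 : ∀ m : ℤ, ((A (k-m)) ^ (1/2:ℝ) * B m)^2 = A (k-m) * (B m)^2 := by
      intro m; rw [mul_pow, half_sq]
    simp_rw [e1, e2, e3] at hcs
    have e4 : (∑' m : ℤ, A (k - m)) = K := by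
      rw [hK]
      exact (Equiv.subLeft k).tsum_eq A
    rwa [e4] at hcs
  -- sum over k
  have hsq : ∀ k : ℤ, ((‖T k‖₊ : ℝ≥0∞))^2 ≤ 4 * K * (∑' m : ℤ, A (k - m) * (B m)^2) := by
    intro k
    calc ((‖T k‖₊ : ℝ≥0∞))^2 ≤ (2 * ∑' m : ℤ, A (k - m) * B m)^2 := by
          gcongr
          exacts [hk1 k]
      _ = 4 * (∑' m : ℤ, A (k - m) * B m)^2 := by rw [mul_pow]; norm_num
      _ ≤ 4 * (K ^ (1/2:ℝ) * (∑' m : ℤ, A (k - m) * (B m)^2) ^ (1/2:ℝ))^2 := by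
          gcongr
          exact hk2 k
      _ = 4 * K * (∑' m : ℤ, A (k - m) * (B m)^2) := by
          rw [mul_pow, half_sq, half_sq, mul_assoc]
  have htot : (∑' k : ℤ, ((‖T k‖₊ : ℝ≥0∞))^2) ≤ 4 * K^2 * S2 := by
    calc (∑' k : ℤ, ((‖T k‖₊ : ℝ≥0∞))^2)
        ≤ ∑' k : ℤ, 4 * K * (∑' m : ℤ, A (k - m) * (B m)^2) := ENNReal.tsum_le_tsum hsq
      _ = 4 * K * ∑' k : ℤ, ∑' m : ℤ, A (k - m) * (B m)^2 := ENNReal.tsum_mul_left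
      _ = 4 * K * ∑' m : ℤ, ∑' k : ℤ, A (k - m) * (B m)^2 := by rw [ENNReal.tsum_comm]
      _ = 4 * K * ∑' m : ℤ, (B m)^2 * ∑' k : ℤ, A (k - m) := by
          congr 1
          refine tsum_congr (fun m => ?_)
          rw [ENNReal.tsum_mul_left.symm]
          exact tsum_congr (fun k => mul_comm _ _)
      _ = 4 * K * ∑' m : ℤ, (B m)^2 * K := by
          congr 1
          refine tsum_congr (fun m => ?_)
          congr 1
          rw [hK]
          exact (Equiv.subRight m).tsum_eq A
      _ = 4 * K^2 * S2 := by
          rw [ENNReal.tsum_mul_right, hS2]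
          ring
  -- identify LHS with the tsum of squares
  have hLHS : l2 0 T = (∑' k : ℤ, ((‖T k‖₊ : ℝ≥0∞))^2) ^ (1/2:ℝ) := by
    rw [l2]
    congr 1
    refine tsum_congr (fun k => ?_)
    rw [mul_zero, Real.rpow_zero, one_mul, ENNReal.ofReal_pow (norm_nonneg _),
      ofReal_norm, enorm_eq_nnnorm]
  -- bound K
  have hKbound : K ≤ ENNReal.ofReal (σ ^ (1/2:ℝ)) * l2 (3/2 + ε) a := by
    have hsplit : ∀ m : ℤ, A m = ENNReal.ofReal (jb m ^ (-(1/2+ε))) *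
        ENNReal.ofReal (jb m ^ (3/2+ε) * ‖a m‖) := by
      intro m
      rw [hA, ← ENNReal.ofReal_mul (Real.rpow_nonneg (jb_nonneg m) _), ← mul_assoc,
        ← Real.rpow_add (jb_pos m)]
      rw [show (-(1/2+ε) + (3/2+ε)) = (1:ℝ) by ring, Real.rpow_one]
    have hcs := cs (fun m => ENNReal.ofReal (jb m ^ (-(1/2+ε))))
      (fun m => ENNReal.ofReal (jb m ^ (3/2+ε) * ‖a m‖))
    have hf2 : ∀ m : ℤ, (ENNReal.ofReal (jb m ^ (-(1/2+ε))))^2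
        = ENNReal.ofReal (jb m ^ (-(1+2*ε))) := by
      intro m
      rw [← ENNReal.ofReal_pow (Real.rpow_nonneg (jb_nonneg m) _), ← Real.rpow_natCast (jb m ^ (-(1/2+ε))) 2,
        ← Real.rpow_mul (jb_nonneg m)]
      norm_num
      ring_nf
    have hg2 : ∀ m : ℤ, (ENNReal.ofReal (jb m ^ (3/2+ε) * ‖a m‖))^2
        = ENNReal.ofReal (jb m ^ (2*(3/2+ε)) * ‖a m‖^2) := by
      intro m
      rw [← ENNReal.ofReal_pow (mul_nonneg (Real.rpow_nonneg (jb_nonneg m) _) (norm_nonneg _)),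
        mul_pow, ← Real.rpow_natCast (jb m ^ (3/2+ε)) 2, ← Real.rpow_mul (jb_nonneg m)]
      norm_num
      ring_nf
    simp_rw [hf2, hg2] at hcs
    have hSeq : (∑' m : ℤ, ENNReal.ofReal (jb m ^ (-(1+2*ε)))) = ENNReal.ofReal σ := by
      rw [hσdef]
      exact (ENNReal.ofReal_tsum_of_nonneg (fun m => Real.rpow_nonneg (jb_nonneg m) _) hsum).symm
    rw [hSeq] at hcs
    calc K = ∑' m : ℤ, ENNReal.ofReal (jb m ^ (-(1/2+ε))) *
        ENNReal.ofReal (jb m ^ (3/2+ε) * ‖a m‖) := by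
          rw [hK]; exact tsum_congr hsplit
      _ ≤ (ENNReal.ofReal σ) ^ (1/2:ℝ) *
          (∑' m : ℤ, ENNReal.ofReal (jb m ^ (2*(3/2+ε)) * ‖a m‖^2)) ^ (1/2:ℝ) := hcs
      _ = ENNReal.ofReal (σ ^ (1/2:ℝ)) * l2 (3/2 + ε) a := by
          rw [ENNReal.ofReal_rpow_of_nonneg hσ0 (by norm_num), l2]
  -- identify S2 with l2 s b
  have hS2eq : S2 ^ (1/2:ℝ) = l2 s b := by
    rw [hS2, l2]
    congr 1
    refine tsum_congr (fun m => ?_)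
    rw [hB, ← ENNReal.ofReal_pow (mul_nonneg (Real.rpow_nonneg (jb_nonneg m) _) (norm_nonneg _)),
      mul_pow, ← Real.rpow_natCast (jb m ^ s) 2, ← Real.rpow_mul (jb_nonneg m)]
    norm_num
    ring_nf
  -- final chain
  calc l2 0 T = (∑' k : ℤ, ((‖T k‖₊ : ℝ≥0∞))^2) ^ (1/2:ℝ) := hLHS
    _ ≤ (4 * K^2 * S2) ^ (1/2:ℝ) := ENNReal.rpow_le_rpow htot (by norm_num)
    _ = 2 * K * S2 ^ (1/2:ℝ) := by
        rw [ENNReal.mul_rpow_of_nonneg _ _ (by norm_num : (0:ℝ) ≤ 1/2),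
          ENNReal.mul_rpow_of_nonneg _ _ (by norm_num : (0:ℝ) ≤ 1/2), sq_half,
          show (4:ℝ≥0∞) = 2^2 by norm_num, sq_half]
    _ ≤ 2 * (ENNReal.ofReal (σ ^ (1/2:ℝ)) * l2 (3/2 + ε) a) * l2 s b := by
        rw [hS2eq]
        gcongr
    _ ≤ ENNReal.ofReal (2 * σ ^ (1/2:ℝ) + 1) * (l2 (3/2 + ε) a * l2 s b) := by
        rw [show (2:ℝ≥0∞) * (ENNReal.ofReal (σ ^ (1/2:ℝ)) * l2 (3/2 + ε) a) * l2 s b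
            = (2 * ENNReal.ofReal (σ ^ (1/2:ℝ))) * (l2 (3/2 + ε) a * l2 s b) by ring]
        gcongr
        rw [← ENNReal.ofReal_ofNat, ← ENNReal.ofReal_mul (by norm_num)]
        exact ENNReal.ofReal_le_ofReal (le_add_of_nonneg_right zero_le_one)
end
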